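/- arXiv:1905.10213 — 6 statements merged into one kernel-verified Lean document; each statement's English description precedes it below -/
import Mathlib

section
/- A nonzero x ∈ X is a cyclic vector for T if and only if for every N ∈ ℕ there exists a polynomial P such that ‖P(T)x − e_0‖_N ≤ 4. -/
/-! The closed span of the orbit of `x` is `T`-invariant, so it contains the
orbit of `e₀`, hence is all of `X`, as soon as it contains `e₀`. Whether `e₀` lies in a closure is
tested on the seminorm balls around it, and balls of radius `4` serve as well as balls of radius `1`
because scaling by `4` is a homeomorphism fixing `0`. -/

open Filter Topology Set Module

theorem Submodule.mem_span_range_iff_exists_sum_range {R M : Type*} [Semiring R]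
    [AddCommMonoid M] [Module R M] {f : ℕ → M} {y : M} :
    y ∈ span R (range f) ↔ ∃ (n : ℕ) (c : ℕ → R), ∑ i ∈ Finset.range (n + 1), c i • f i = y := by
  constructor
  · intro hy
    obtain ⟨c, rfl⟩ := Finsupp.mem_span_range_iff_exists_finsupp.mp hy
    refine ⟨c.support.sup id, c, (Finset.sum_subset (fun i hi => ?_) fun i _ hi => ?_).symm⟩
    · exact Finset.mem_range_succ_iff.mpr (Finset.le_sup (f := id) hi)
    · rw [Finsupp.notMem_support_iff.mp hi, zero_smul]
  · rintro ⟨n, c, rfl⟩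
    exact sum_mem fun i _ => smul_mem _ _ (subset_span ⟨i, rfl⟩)

namespace Module.End

variable {R M : Type*} [Semiring R] [AddCommMonoid M] [Module R M]

theorem span_range_iterate_mem_invtSubmodule (f : End R M) (x : M) :
    Submodule.span R (range fun k => f^[k] x) ∈ f.invtSubmodule := by
  rw [mem_invtSubmodule_iff_map_le, Submodule.map_span, Submodule.span_le]
  rintro _ ⟨_, ⟨k, rfl⟩, rfl⟩
  exact Submodule.subset_span ⟨k + 1, Function.iterate_succ_apply' f k x⟩

theorem span_range_iterate_le {f : End R M} {S : Submodule R M} (hS : S ∈ f.invtSubmodule)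
    {x : M} (hx : x ∈ S) : Submodule.span R (range fun k => f^[k] x) ≤ S := by
  refine Submodule.span_le.mpr (range_subset_iff.mpr fun k => ?_)
  induction k with
  | zero => exact hx
  | succ k ih =>
    rw [Function.iterate_succ_apply']
    exact hS ih

end Module.End

theorem Submodule.dense_iff_mem_closure_of_dense_span_iterate {R M : Type*} [Semiring R]
    [TopologicalSpace R] [AddCommMonoid M] [Module R M] [TopologicalSpace M] [ContinuousAdd M]
    [ContinuousSMul R M] {T : M →L[R] M} {S : Submodule R M} (hS : S ∈ End.invtSubmodule T)
    {e : M} (he : Dense (span R (range fun k => T^[k] e) : Set M)) :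
    Dense (S : Set M) ↔ e ∈ closure (S : Set M) := by
  refine ⟨fun hd => hd.closure_eq ▸ mem_univ e, fun hmem => ?_⟩
  have hle : span R (range fun k => T^[k] e) ≤ S.topologicalClosure :=
    End.span_range_iterate_le (topologicalClosure_mem_invtSubmodule hS) hmem
  exact dense_closure.mp (he.mono hle)

section Seminorm

variable {X ι : Type*} [AddCommGroup X] [Module ℝ X] [TopologicalSpace X] {q : ι → Prop}
  {p : ι → Seminorm ℝ X}

theorem Filter.HasBasis.seminorm_le_of_le_one [ContinuousConstSMul ℝ X]
    (h : (𝓝 (0 : X)).HasBasis q fun i => {x | p i x ≤ 1}) {C : ℝ} (hC : 0 < C) :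
    (𝓝 (0 : X)).HasBasis q fun i => {x | p i x ≤ C} := by
  have hmap := h.map (Homeomorph.smulOfNeZero C hC.ne')
  rw [Homeomorph.map_nhds_eq] at hmap
  simp only [Homeomorph.smulOfNeZero_apply, smul_zero] at hmap
  convert hmap using 2 with i
  rw [image_smul, ← Seminorm.closedBall_zero_eq, ← Seminorm.closedBall_zero_eq,
    Seminorm.smul_closedBall_zero (by simpa using hC.ne'), Real.norm_of_nonneg hC.le, mul_one]

theorem mem_closure_iff_exists_seminorm_sub_le [IsTopologicalAddGroup X] [ContinuousConstSMul ℝ X]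
    (h : (𝓝 (0 : X)).HasBasis q fun i => {x | p i x ≤ 1}) {C : ℝ} (hC : 0 < C) {s : Set X}
    {e : X} : e ∈ closure s ↔ ∀ i, q i → ∃ y ∈ s, p i (y - e) ≤ C := by
  have hb := (h.seminorm_le_of_le_one hC).comap (· - e)
  rw [nhds_translation_sub] at hb
  exact mem_closure_iff_nhds_basis hb

end Seminorm

theorem cyclic_iff_four_general (X : Type*) [AddCommGroup X] [Module ℝ X] [TopologicalSpace X]
    [IsTopologicalAddGroup X] [ContinuousSMul ℝ X]
    (p : ℕ → Seminorm ℝ X)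
    (hbasis : (nhds (0 : X)).HasBasis (fun _ : ℕ => True) (fun N => {x : X | p N x ≤ 1}))
    (T : X →L[ℝ] X) (e₀ : X)
    (he₀ : Dense (Submodule.span ℝ (Set.range fun k : ℕ => (⇑T)^[k] e₀) : Set X))
    (x : X) :
    Dense (Submodule.span ℝ (Set.range fun k : ℕ => (⇑T)^[k] x) : Set X) ↔
      ∀ N : ℕ, ∃ (n : ℕ) (c : ℕ → ℝ),
        p N ((∑ i ∈ Finset.range (n + 1), c i • (⇑T)^[i] x) - e₀) ≤ 4 := by
  have hinvt : Submodule.span ℝ (range fun k => (⇑T)^[k] x) ∈ End.invtSubmodule (T : End ℝ X) :=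
    End.span_range_iterate_mem_invtSubmodule _ x
  rw [Submodule.dense_iff_mem_closure_of_dense_span_iterate hinvt he₀,
    mem_closure_iff_exists_seminorm_sub_le hbasis four_pos]
  simp [Submodule.mem_span_range_iff_exists_sum_range]

/-- On a real topological vector space whose topology is generated by an increasing sequence of
seminorms whose unit balls form a basis of neighborhoods of zero, given a continuous linear
operator `T` with cyclic vector `e₀`, a nonzero `x` is cyclic for `T` iff for every `N` there is
a polynomial `P` with `‖P(T)x - e₀‖_N ≤ 4`. -/
theorem cyclic_iff_four (X : Type*) [AddCommGroup X] [Module ℝ X] [TopologicalSpace X]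
    [IsTopologicalAddGroup X] [ContinuousSMul ℝ X]
    (p : ℕ → Seminorm ℝ X)
    (hmono : ∀ N (x : X), p N x ≤ p (N + 1) x)
    (hbasis : (nhds (0 : X)).HasBasis (fun _ : ℕ => True) (fun N => {x : X | p N x ≤ 1}))
    (T : X →L[ℝ] X) (e₀ : X)
    (he₀ : Dense (Submodule.span ℝ (Set.range fun k : ℕ => (⇑T)^[k] e₀) : Set X))
    (x : X) (hx : x ≠ 0) :
    Dense (Submodule.span ℝ (Set.range fun k : ℕ => (⇑T)^[k] x) : Set X) ↔
      ∀ N : ℕ, ∃ (n : ℕ) (c : ℕ → ℝ),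
        p N ((∑ i ∈ Finset.range (n + 1), c i • (⇑T)^[i] x) - e₀) ≤ 4 :=
  cyclic_iff_four_general X p hbasis T e₀ he₀ x
end

section
/- There exists a real number D ≥ 1 with the following property: for every y ∈ K and every linear map T : E → E which is a perturbed weighted forward shift (i.e., for every j, Te_j ∈ span{e_0,…,e_{j+1}} with nonzero coefficient of e_{j+1}) and satisfies T^j e_0 = γ_j for j = 0,…,c+d−1, there is a polynomial P(t) = Σ_{i=1}^{c+d} c_i·t^i with Σ_{i=1}^{c+d} |c_i| ≤ D for which ‖P(T)y − e_0‖ ≤ 2ε‖e_c‖ + D·max{‖T^j e_0‖ : c+d ≤ j ≤ 2(c+d−1)}. -/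
/-!
Write `y = Q(T) e₀` with `Q = ∑ yⱼ Xʲ`. As some `yⱼ` with `j < c` is nonzero, `Q = Xᵐ R` with
`m < c` and `R` invertible in `ℝ⟦X⟧`, so `P = X^(c-m) R⁻¹`, truncated below degree `c + d`, has
no constant term and `P Q ≡ X^c mod X^(c+d)`. The part of `P Q` below degree `c + d` acts on `e₀`
through the `γₖ`, giving `γ_c`; the rest produces vectors `T^k e₀` with
`c + d ≤ k ≤ 2(c + d - 1)` and coefficients of total size at most `∑|Pᵢ| ∑|yⱼ|`; and
`‖γ_c - e₀‖ = ε‖e_c‖`. The truncated product depends continuously on the coordinates of `y`, so by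
compactness of `K` finitely many polynomials `P` bring it within `ε‖e_c‖` of `X^c` for all `y ∈ K`.
-/

open Finset PowerSeries Submodule

def IsPerturbedCanonicalBasis (K : Type*) {M : Type*} [DivisionRing K] [AddCommGroup M]
    [Module K M] (e γ : ℕ → M) (n : ℕ) : Prop :=
  ∀ j < n, ∃ μ : Fin (j + 1) → K, μ (Fin.last j) ≠ 0 ∧ γ j = ∑ i, μ i • e i

section PerturbedCanonicalBasis

variable {K M : Type*} [DivisionRing K] [AddCommGroup M] [Module K M] {e γ : ℕ → M} {n : ℕ}

theorem IsPerturbedCanonicalBasis.mem_span (hγ : IsPerturbedCanonicalBasis K e γ n) {j : ℕ}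
    (hj : j < n) : e j ∈ span K (Set.range fun i : Fin n => γ i) := by
  induction j using Nat.strong_induction_on with
  | _ j ih =>
    obtain ⟨μ, hμ, hγj⟩ := hγ j hj
    rw [Fin.sum_univ_castSucc, Fin.val_last] at hγj
    simp only [Fin.val_castSucc] at hγj
    have hej : e j = (μ (Fin.last j))⁻¹ • (γ j - ∑ i : Fin j, μ i.castSucc • e i) := by
      rw [hγj, add_sub_cancel_left, smul_smul, inv_mul_cancel₀ hμ, one_smul]
    rw [hej]
    refine smul_mem _ _ (sub_mem (subset_span ⟨⟨j, hj⟩, rfl⟩) (sum_mem fun i _ => ?_))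
    exact smul_mem _ _ (ih i i.2 (i.2.trans hj))

theorem IsPerturbedCanonicalBasis.span_image_le (hγ : IsPerturbedCanonicalBasis K e γ n) :
    span K (e '' {i | i < n}) ≤ span K (Set.range fun i : Fin n => γ i) :=
  span_le.mpr <| by
    rintro _ ⟨j, hj, rfl⟩
    exact hγ.mem_span hj

theorem IsPerturbedCanonicalBasis.linearIndependent (hγ : IsPerturbedCanonicalBasis K e γ n)
    (he : LinearIndependent K e) : LinearIndependent K fun i : Fin n => γ i := by
  rw [linearIndependent_iff_card_le_finrank_span]
  have := FiniteDimensional.span_of_finite K (Set.finite_range fun i : Fin n => γ i)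
  calc Fintype.card (Fin n)
      = Module.finrank K (span K (Set.range fun i : Fin n => e i)) :=
        (finrank_span_eq_card (he.comp _ Fin.val_injective)).symm
    _ ≤ (Set.range fun i : Fin n => γ i).finrank K :=
        Submodule.finrank_mono <| span_le.mpr <| Set.range_subset_iff.mpr fun i =>
          hγ.mem_span i.2

end PerturbedCanonicalBasis

theorem IsCompact.exists_isCompact_image_sum_smul_eq {𝕜 E : Type*} [NontriviallyNormedField 𝕜]
    [CompleteSpace 𝕜] [NormedAddCommGroup E] [NormedSpace 𝕜 E] {γ : ℕ → E} {n : ℕ}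
    (hγ : LinearIndependent 𝕜 fun i : Fin n => γ i) {K : Set E} (hK : IsCompact K)
    (hKγ : K ⊆ span 𝕜 (Set.range fun i : Fin n => γ i)) :
    ∃ K₁ : Set (ℕ → 𝕜), IsCompact K₁ ∧ (fun a => ∑ j ∈ range n, a j • γ j) '' K₁ = K := by
  set Φ := Fintype.linearCombination 𝕜 fun i : Fin n => γ i
  have hΦ : Topology.IsClosedEmbedding Φ := LinearMap.isClosedEmbedding_of_injective
    (LinearMap.ker_eq_bot.mpr hγ.fintypeLinearCombination_injective)
  set pad : (Fin n → 𝕜) → ℕ → 𝕜 := fun v j => if h : j < n then v ⟨j, h⟩ else 0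
  have hpad : Continuous pad := continuous_pi fun j => by
    by_cases h : j < n <;> simp only [pad, h, dite_true, dite_false] <;> fun_prop
  have hΦpad : ∀ v, ∑ j ∈ range n, pad v j • γ j = Φ v := fun v => by
    simp [Φ, pad, Fintype.linearCombination_apply, ← Fin.sum_univ_eq_sum_range]
  refine ⟨pad '' (Φ ⁻¹' K), (hΦ.isCompact_preimage hK).image hpad, ?_⟩
  rw [Set.image_image]
  simp_rw [hΦpad]
  rw [Set.image_preimage_eq_of_subset]
  rwa [← LinearMap.coe_range, Fintype.range_linearCombination]

theorem PowerSeries.exists_constantCoeff_eq_zero_mul_eq_X_pow {k : Type*} [Field k] {Y : k⟦X⟧}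
    {c : ℕ} (h : Y.order < c) : ∃ P : k⟦X⟧, constantCoeff P = 0 ∧ P * Y = X ^ c := by
  have hY : Y ≠ 0 := by rintro rfl; simp at h
  set m := Y.order.toNat
  set R := Y.divXPowOrder
  have hYR : Y = X ^ m * R := X_pow_order_mul_divXPowOrder.symm
  have hm : m < c := by
    rw [← coe_toNat_order hY] at h
    exact_mod_cast h
  have hR : constantCoeff R ≠ 0 := by
    rw [constantCoeff_divXPowOrder]
    exact coeff_order hY
  refine ⟨X ^ (c - m) * R⁻¹, by simp [show c - m ≠ 0 by omega], ?_⟩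
  calc X ^ (c - m) * R⁻¹ * Y = X ^ (c - m) * X ^ m * (R⁻¹ * R) := by rw [hYR]; ring
    _ = X ^ c := by
        rw [PowerSeries.inv_mul_cancel _ hR, mul_one, ← pow_add, Nat.sub_add_cancel hm.le]

theorem exists_coeff_mul_eq_coeff_X_pow {k : Type*} [Field k] {b : ℕ → k} {c : ℕ}
    (hb : ∃ j < c, b j ≠ 0) (n : ℕ) :
    ∃ a : ℕ → k, a 0 = 0 ∧ (∀ i, n ≤ i → a i = 0) ∧
      ∀ l < n, coeff l (mk a * mk b) = coeff l (X ^ c : k⟦X⟧) := by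
  obtain ⟨j, hjc, hj⟩ := hb
  obtain ⟨P, hP0, hP⟩ := exists_constantCoeff_eq_zero_mul_eq_X_pow
    ((order_le j (by rwa [coeff_mk])).trans_lt (by exact_mod_cast hjc) : (mk b).order < c)
  have htrunc : mk (fun i => (trunc n P).coeff i) = (trunc n P : k⟦X⟧) := by
    ext i; simp
  refine ⟨fun i => (trunc n P).coeff i, by simp [coeff_trunc, hP0], fun i hi => by
    simp [coeff_trunc, not_lt.mpr hi], fun l hl => ?_⟩
  rw [← hP, htrunc, coeff_mul_eq_coeff_trunc_mul_trunc _ _ hl,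
    coeff_mul_eq_coeff_trunc_mul_trunc P _ hl, trunc_trunc]

theorem Finset.sum_Icc_one_eq_sum_range {M : Type*} [AddCommMonoid M] {f : ℕ → M} {n : ℕ}
    (h0 : f 0 = 0) (hn : f n = 0) : ∑ i ∈ Icc 1 n, f i = ∑ i ∈ range n, f i := by
  calc ∑ i ∈ Icc 1 n, f i = f 0 + ∑ i ∈ Ico 1 (n + 1), f i := by
        rw [h0, zero_add, Ico_add_one_right_eq_Icc]
    _ = ∑ i ∈ range (n + 1), f i := by
        rw [range_eq_Ico, sum_eq_sum_Ico_succ_bot n.succ_pos]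
    _ = ∑ i ∈ range n, f i := by rw [sum_range_succ, hn, add_zero]

section TruncatedProduct

variable {R M : Type*} [CommSemiring R] [AddCommMonoid M] [Module R M]

noncomputable def truncLinComb (γ : ℕ → M) (n : ℕ) (F : R⟦X⟧) : M :=
  ∑ k ∈ range n, coeff k F • γ k

theorem truncLinComb_eq_of_coeff_eq_coeff_X_pow {γ : ℕ → M} {n c : ℕ} (hc : c < n) {F : R⟦X⟧}
    (hF : ∀ k < n, coeff k F = coeff k (X ^ c : R⟦X⟧)) : truncLinComb γ n F = γ c := by
  rw [truncLinComb, sum_congr rfl fun k hk => by rw [hF k (mem_range.mp hk)]]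
  simp [coeff_X_pow, ite_smul, hc]

theorem sum_range_sum_range_mul_smul (a b : ℕ → R) (w : ℕ → M) (n : ℕ) :
    ∑ i ∈ range n, ∑ j ∈ range n, (a i * b j) • w (i + j) =
      truncLinComb w n (mk a * mk b) +
        ∑ i ∈ range n, ∑ j ∈ range n, if i + j < n then 0 else (a i * b j) • w (i + j) := by
  have hlow : ∑ i ∈ range n, ∑ j ∈ range n,
      (if i + j < n then (a i * b j) • w (i + j) else 0) = truncLinComb w n (mk a * mk b) := by
    calc _ = ∑ i ∈ range n, ∑ j ∈ range (n - i), (a i * b j) • w (i + j) := by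
          refine sum_congr rfl fun i _ => ?_
          rw [← sum_filter]
          congr 1
          ext j
          simp only [mem_filter, mem_range]
          omega
      _ = ∑ k ∈ range n, ∑ i ∈ range (k + 1), (a i * b (k - i)) • w (i + (k - i)) :=
          (sum_range_diag_flip n fun i j => (a i * b j) • w (i + j)).symm
      _ = truncLinComb w n (mk a * mk b) := by
          refine sum_congr rfl fun k _ => ?_
          rw [coeff_mul, Nat.sum_antidiagonal_eq_sum_range_succ_mk, sum_smul]
          refine sum_congr rfl fun i hi => ?_
          rw [coeff_mk, coeff_mk, Nat.add_sub_cancel' (Nat.lt_succ_iff.mp (mem_range.mp hi))]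
  rw [← hlow, ← sum_add_distrib]
  refine sum_congr rfl fun i _ => ?_
  rw [← sum_add_distrib]
  refine sum_congr rfl fun j _ => ?_
  split_ifs <;> simp

end TruncatedProduct

theorem norm_sum_range_sum_range_ite_le {E : Type*} [SeminormedAddCommGroup E] [NormedSpace ℝ E]
    (a b : ℕ → ℝ) (w : ℕ → E) {n : ℕ} {S : ℝ} (hS : 0 ≤ S)
    (hw : ∀ k ∈ Set.Icc n (2 * (n - 1)), ‖w k‖ ≤ S) :
    ‖∑ i ∈ range n, ∑ j ∈ range n, if i + j < n then 0 else (a i * b j) • w (i + j)‖ ≤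
      (∑ i ∈ range n, |a i|) * (∑ j ∈ range n, |b j|) * S := by
  rw [sum_mul_sum, sum_mul]
  refine (norm_sum_le _ _).trans (sum_le_sum fun i hi => ?_)
  rw [sum_mul]
  refine (norm_sum_le _ _).trans (sum_le_sum fun j hj => ?_)
  simp only [mem_range] at hi hj
  split_ifs with hij
  · rw [norm_zero]
    positivity
  · rw [norm_smul, Real.norm_eq_abs, abs_mul]
    exact mul_le_mul_of_nonneg_left (hw _ ⟨by omega, by omega⟩) (by positivity)

theorem sum_range_smul_pow_apply_sum_range_smul {R M : Type*} [CommSemiring R] [AddCommMonoid M]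
    [Module R M] (T : M →ₗ[R] M) {x : M} {γ : ℕ → M} {n : ℕ} (hT : ∀ j < n, (T ^ j) x = γ j)
    (a b : ℕ → R) :
    ∑ i ∈ range n, a i • (T ^ i) (∑ j ∈ range n, b j • γ j) =
      ∑ i ∈ range n, ∑ j ∈ range n, (a i * b j) • (T ^ (i + j)) x := by
  refine sum_congr rfl fun i _ => ?_
  rw [map_sum, smul_sum]
  refine sum_congr rfl fun j hj => ?_
  rw [← hT j (mem_range.mp hj), map_smul, smul_smul, pow_add, Module.End.mul_apply]

theorem norm_sum_Icc_smul_pow_apply_sub_le {E : Type*} [NormedAddCommGroup E] [NormedSpace ℝ E]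
    (T : E →ₗ[ℝ] E) {x : E} {γ : ℕ → E} {n : ℕ} (hT : ∀ j < n, (T ^ j) x = γ j)
    {a b : ℕ → ℝ} (ha0 : a 0 = 0) (han : a n = 0) {D : ℝ}
    (hD : (∑ i ∈ Icc 1 n, |a i|) * (∑ j ∈ range n, |b j|) ≤ D) (z : E) :
    ‖∑ i ∈ Icc 1 n, a i • (T ^ i) (∑ j ∈ range n, b j • γ j) - z‖ ≤
      ‖truncLinComb γ n (mk a * mk b) - z‖ +
        D * sSup ((fun k => ‖(T ^ k) x‖) '' Set.Icc n (2 * (n - 1))) := by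
  set S := sSup ((fun k => ‖(T ^ k) x‖) '' Set.Icc n (2 * (n - 1)))
  have hS : 0 ≤ S := Real.sSup_nonneg (by rintro _ ⟨k, -, rfl⟩; exact norm_nonneg _)
  have hTS : ∀ k ∈ Set.Icc n (2 * (n - 1)), ‖(T ^ k) x‖ ≤ S := fun k hk =>
    le_csSup ((Set.finite_Icc _ _).image _).bddAbove ⟨k, hk, rfl⟩
  have hlow : truncLinComb (fun k => (T ^ k) x) n (mk a * mk b) =
      truncLinComb γ n (mk a * mk b) :=
    sum_congr rfl fun k hk => by dsimp only; rw [hT k (mem_range.mp hk)]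
  rw [sum_Icc_one_eq_sum_range (by simp [ha0]) (by simp [han])] at hD
  rw [sum_Icc_one_eq_sum_range (by simp [ha0]) (by simp [han]),
    sum_range_smul_pow_apply_sum_range_smul T hT,
    sum_range_sum_range_mul_smul a b fun k => (T ^ k) x, hlow, add_sub_right_comm]
  refine (norm_add_le _ _).trans (add_le_add_right ?_ _)
  exact (norm_sum_range_sum_range_ite_le a b _ hS hTS).trans (mul_le_mul_of_nonneg_right hD hS)

theorem continuous_truncLinComb_mk_mul_mk {𝕜 E : Type*} [NormedField 𝕜] [NormedAddCommGroup E]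
    [NormedSpace 𝕜 E] (γ : ℕ → E) (n : ℕ) (a : ℕ → 𝕜) :
    Continuous fun b : ℕ → 𝕜 => truncLinComb γ n (mk a * mk b) := by
  simp only [truncLinComb, coeff_mul, coeff_mk]
  fun_prop

theorem IsCompact.exists_forall_exists_norm_truncLinComb_sub_lt {E : Type*}
    [NormedAddCommGroup E] [NormedSpace ℝ E] (γ : ℕ → E) {n c : ℕ} (hcn : c < n)
    {K₁ : Set (ℕ → ℝ)} (hK₁ : IsCompact K₁) (hK₁c : ∀ b ∈ K₁, ∃ j < c, b j ≠ 0) {δ : ℝ}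
    (hδ : 0 < δ) :
    ∃ D : ℝ, 1 ≤ D ∧ ∀ b ∈ K₁, ∃ a : ℕ → ℝ, a 0 = 0 ∧ a n = 0 ∧
      ∑ i ∈ Icc 1 n, |a i| ≤ D ∧ (∑ i ∈ Icc 1 n, |a i|) * (∑ j ∈ range n, |b j|) ≤ D ∧
      ‖truncLinComb γ n (mk a * mk b) - γ c‖ < δ := by
  choose! co hco0 hcon hco using fun b hb => exists_coeff_mul_eq_coeff_X_pow (hK₁c b hb) n
  obtain ⟨t, htK₁, hcover⟩ := hK₁.elim_nhds_subcover
    (fun a => {b | ‖truncLinComb γ n (mk (co a) * mk b) - γ c‖ < δ}) fun a ha =>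
      (((continuous_truncLinComb_mk_mul_mk γ n _).sub continuous_const).norm.isOpen_preimage _
        isOpen_Iio).mem_nhds (by simpa [truncLinComb_eq_of_coeff_eq_coeff_X_pow hcn (hco a ha)])
  obtain ⟨R, hR⟩ := hK₁.bddAbove_image (f := fun b => ∑ j ∈ range n, |b j|) (by fun_prop)
  set A := ∑ a ∈ t, ∑ i ∈ Icc 1 n, |co a i|
  refine ⟨max 1 (A * max 1 R), le_max_left _ _, fun b hb => ?_⟩
  obtain ⟨a, hat, hba⟩ := Set.mem_iUnion₂.mp (hcover hb)
  have haA : ∑ i ∈ Icc 1 n, |co a i| ≤ A :=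
    single_le_sum (f := fun a => ∑ i ∈ Icc 1 n, |co a i|) (fun _ _ => by positivity) hat
  have hA0 : 0 ≤ A := haA.trans' (by positivity)
  refine ⟨co a, hco0 a (htK₁ a hat), hcon a (htK₁ a hat) n le_rfl, ?_, ?_, hba⟩
  · exact haA.trans ((le_mul_of_one_le_right hA0 (le_max_left _ _)).trans (le_max_right _ _))
  · exact (mul_le_mul haA ((hR ⟨b, hb, rfl⟩).trans (le_max_right _ _)) (by positivity)
      hA0).trans (le_max_right _ _)

theorem read_lemma_general (E : Type*) [NormedAddCommGroup E] [NormedSpace ℝ E]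
    (e : ℕ → E) (he : LinearIndependent ℝ e)
    (ε : ℝ) (hε : 0 < ε) (c d : ℕ) (hd : 0 < d)
    (γ : ℕ → E)
    (hγ : ∀ j < c + d, ∃ μ : Fin (j + 1) → ℝ, μ (Fin.last j) ≠ 0 ∧
      γ j = ∑ i : Fin (j + 1), μ i • e i)
    (hγc : γ c = ε • e c + e 0)
    (K : Set E) (hKH : K ⊆ (Submodule.span ℝ (e '' {i | i < c + d}) : Set E))
    (hKcomp : IsCompact K)
    (hKcoef : ∀ y ∈ K, ∀ yc : ℕ → ℝ,
      y = ∑ i ∈ Finset.range (c + d), yc i • γ i → ∃ j < c, yc j ≠ 0) :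
    ∃ D : ℝ, 1 ≤ D ∧ ∀ y ∈ K, ∀ T : E →ₗ[ℝ] E,
      (∀ j : ℕ, ∃ lam : Fin (j + 2) → ℝ, lam (Fin.last (j + 1)) ≠ 0 ∧
        T (e j) = ∑ i : Fin (j + 2), lam i • e i) →
      (∀ j < c + d, (T ^ j) (e 0) = γ j) →
      ∃ co : ℕ → ℝ, (∑ i ∈ Finset.Icc 1 (c + d), |co i|) ≤ D ∧
        ‖(∑ i ∈ Finset.Icc 1 (c + d), co i • (T ^ i) y) - e 0‖ ≤
          2 * ε * ‖e c‖ +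
            D * sSup ((fun j => ‖(T ^ j) (e 0)‖) '' Set.Icc (c + d) (2 * (c + d - 1))) := by
  have hγ' : IsPerturbedCanonicalBasis ℝ e γ (c + d) := hγ
  obtain ⟨K₁, hK₁, hK₁K⟩ := hKcomp.exists_isCompact_image_sum_smul_eq (hγ'.linearIndependent he)
    (hKH.trans hγ'.span_image_le)
  obtain ⟨D, hD, hK₁D⟩ := hK₁.exists_forall_exists_norm_truncLinComb_sub_lt γ
    (by omega : c < c + d) (fun b hb => hKcoef _ (hK₁K ▸ Set.mem_image_of_mem _ hb) b rfl)
    (mul_pos hε (norm_pos_iff.mpr (he.ne_zero c)))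
  refine ⟨D, hD, ?_⟩
  rintro _ hy T - hT
  obtain ⟨b, hb, rfl⟩ := hK₁K.symm.subset hy
  obtain ⟨a, ha0, han, haD, habD, hab⟩ := hK₁D b hb
  have hγe : ‖γ c - e 0‖ = ε * ‖e c‖ := by
    rw [hγc, add_sub_cancel_right, norm_smul, Real.norm_of_nonneg hε.le]
  refine ⟨a, haD, ?_⟩
  calc _ ≤ ‖_ - γ c‖ + ‖γ c - e 0‖ := norm_sub_le_norm_sub_add_norm_sub _ _ _
    _ ≤ ε * ‖e c‖ + D * sSup ((fun j => ‖(T ^ j) (e 0)‖) '' Set.Icc (c + d) (2 * (c + d - 1))) +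
          ε * ‖e c‖ :=
        add_le_add ((norm_sum_Icc_smul_pow_apply_sub_le T hT ha0 han habD _).trans
          (add_le_add_left hab.le _)) hγe.le
    _ = _ := by ring

/-- Read's lemma: existence of a uniform constant `D ≥ 1` such that for every `y` in the compact
set `K` and every perturbed weighted forward shift `T` with `T^j e₀ = γ_j` for `j < c + d`,
there is a polynomial `P(t) = Σ_{i=1}^{c+d} c_i t^i` with `Σ |c_i| ≤ D` and
`‖P(T)y - e₀‖ ≤ 2ε‖e_c‖ + D · max_{c+d ≤ j ≤ 2(c+d-1)} ‖T^j e₀‖`. -/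
theorem read_lemma (E : Type*) [NormedAddCommGroup E] [NormedSpace ℝ E]
    (e : ℕ → E) (he : LinearIndependent ℝ e)
    (hspan : Submodule.span ℝ (Set.range e) = ⊤)
    (ε : ℝ) (hε : 0 < ε) (c d : ℕ) (hc : 0 < c) (hd : 0 < d)
    (γ : ℕ → E)
    (hγ : ∀ j < c + d, ∃ μ : Fin (j + 1) → ℝ, μ (Fin.last j) ≠ 0 ∧
      γ j = ∑ i : Fin (j + 1), μ i • e i)
    (hγc : γ c = ε • e c + e 0)
    (K : Set E) (hKH : K ⊆ (Submodule.span ℝ (e '' {i | i < c + d}) : Set E))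
    (hKcomp : IsCompact K)
    (hKcoef : ∀ y ∈ K, ∀ yc : ℕ → ℝ,
      y = ∑ i ∈ Finset.range (c + d), yc i • γ i → ∃ j < c, yc j ≠ 0) :
    ∃ D : ℝ, 1 ≤ D ∧ ∀ y ∈ K, ∀ T : E →ₗ[ℝ] E,
      (∀ j : ℕ, ∃ lam : Fin (j + 2) → ℝ, lam (Fin.last (j + 1)) ≠ 0 ∧
        T (e j) = ∑ i : Fin (j + 2), lam i • e i) →
      (∀ j < c + d, (T ^ j) (e 0) = γ j) →
      ∃ co : ℕ → ℝ, (∑ i ∈ Finset.Icc 1 (c + d), |co i|) ≤ D ∧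
        ‖(∑ i ∈ Finset.Icc 1 (c + d), co i • (T ^ i) y) - e 0‖ ≤
          2 * ε * ‖e c‖ +
            D * sSup ((fun j => ‖(T ^ j) (e 0)‖) '' Set.Icc (c + d) (2 * (c + d - 1))) :=
  read_lemma_general E e he ε hε c d hd γ hγ hγc K hKH hKcomp hKcoef
end

section
/- There exists a doubly indexed family of reals (A_{N,j})_{N,j∈ℕ} such that: (1) A_{N,j} ≥ 1 for every N,j; (2) for every j, the sequence N ↦ A_{N,j} is increasing and unbounded; (3) for every N, the sequence j ↦ A_{N,j} is increasing and unbounded; (4) A_{N,j+1} ≤ 2·A_{N,j} for every N,j; (5) lim_{j→∞} A_{N,j}/A_{N+1,j} = 0 for every N; (6) lim_{j→∞} 2^j/A_{N,j} = ∞ for every N; (7) the seminorm families {p_N : N ∈ ℕ} and {|·|_N : N ∈ ℕ} are equivalent on s: for every N there exist M ∈ ℕ and C > 0 with p_N(x) ≤ C·|x|_M and |x|_N ≤ C·p_M(x) for all x ∈ s. -/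
open Filter

/-!
Take `A N j = (N + 1) * min (2 ^ j) ((j + 1) ^ (N + 1))`. Every polynomial in `j` is eventually
below `2 ^ j`, so for large `j` the matrix is `(N + 1) (j + 1) ^ (N + 1)`; this gives the
asymptotic properties and the equivalence with the seminorms `p_N`. The cap `2 ^ j` doubles at
each step, the polynomial branch grows by the factor `((j + 2) / (j + 1)) ^ m ≤ 2` as long as
`2 m ≤ j + 2` (Bernoulli), and beyond that the cap is the smaller branch; hence
`A N (j + 1) ≤ 2 A N j`.
-/

lemma tendsto_succ_pow_div_two_pow (K : ℕ) :
    Tendsto (fun j : ℕ => ((j : ℝ) + 1) ^ K / 2 ^ j) atTop (nhds 0) := by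
  have h := ((tendsto_pow_const_div_const_pow_of_one_lt K (one_lt_two (α := ℝ))).comp
    (tendsto_add_atTop_nat 1)).const_mul 2
  rw [mul_zero] at h
  refine h.congr fun j => ?_
  simp only [Function.comp_apply, Nat.cast_succ, pow_succ]
  field_simp

lemma eventually_succ_pow_le_two_pow (K : ℕ) :
    ∀ᶠ j : ℕ in atTop, ((j : ℝ) + 1) ^ K ≤ 2 ^ j := by
  filter_upwards [(tendsto_succ_pow_div_two_pow K).eventually_lt_const one_pos] with j hj
  exact ((div_lt_one (by positivity)).1 hj).le

lemma exists_succ_pow_le_mul_two_pow (K : ℕ) :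
    ∃ C : ℝ, ∀ j : ℕ, ((j : ℝ) + 1) ^ K ≤ C * 2 ^ j := by
  obtain ⟨C, hC⟩ := (tendsto_succ_pow_div_two_pow K).bddAbove_range
  exact ⟨C, fun j => (div_le_iff₀ (by positivity)).1 (hC ⟨j, rfl⟩)⟩

lemma two_pow_le_succ_pow {m j : ℕ} (h : j + 3 ≤ 2 * m) : 2 ^ j ≤ (j + 1) ^ m := by
  rcases lt_or_ge j 3 with hj | hj
  · calc 2 ^ j ≤ (j + 1) ^ 2 := by interval_cases j <;> norm_num
      _ ≤ (j + 1) ^ m := Nat.pow_le_pow_right (by omega) (by omega)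
  · calc 2 ^ j ≤ 2 ^ (2 * m) := Nat.pow_le_pow_right two_pos (by omega)
      _ = 4 ^ m := by rw [pow_mul]; rfl
      _ ≤ (j + 1) ^ m := Nat.pow_le_pow_left (by omega) m

lemma add_two_pow_le_two_mul_succ_pow {m j : ℕ} (h : 2 * m ≤ j + 2) :
    ((j : ℝ) + 2) ^ m ≤ 2 * ((j : ℝ) + 1) ^ m := by
  have hj : (1 : ℝ) ≤ j + 2 := by linarith [j.cast_nonneg (α := ℝ)]
  set t : ℝ := ((j : ℝ) + 2)⁻¹
  have ht : 1 + -t = ((j : ℝ) + 1) / (j + 2) := by simp only [t]; field_simp; ring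
  have hmt : (m : ℝ) * t ≤ 1 / 2 := by
    rw [← div_eq_mul_inv, div_le_iff₀ (by positivity)]
    have : (2 * m : ℝ) ≤ j + 2 := by exact_mod_cast h
    linarith
  have hbern := one_add_mul_le_pow (a := -t) (by linarith [inv_le_one_of_one_le₀ hj]) m
  rw [ht, div_pow, le_div_iff₀ (by positivity)] at hbern
  nlinarith [pow_pos (zero_lt_one.trans_le hj) m]

lemma min_two_pow_succ_le (m j : ℕ) :
    min ((2 : ℝ) ^ (j + 1)) (((j : ℝ) + 2) ^ m) ≤
      2 * min ((2 : ℝ) ^ j) (((j : ℝ) + 1) ^ m) := by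
  rw [mul_min_of_nonneg _ _ zero_le_two]
  have hcap : min ((2 : ℝ) ^ (j + 1)) (((j : ℝ) + 2) ^ m) ≤ 2 * 2 ^ j :=
    (min_le_left _ _).trans_eq (pow_succ' _ _)
  refine le_min hcap ?_
  rcases le_or_gt (2 * m) (j + 2) with h | h
  · exact (min_le_right _ _).trans (add_two_pow_le_two_mul_succ_pow h)
  · have hpow : (2 : ℝ) ^ j ≤ ((j : ℝ) + 1) ^ m := by
      exact_mod_cast two_pow_le_succ_pow (by omega)
    exact hcap.trans (by gcongr)

section Summation

variable {ι : Type*} {w a b : ι → ℝ} {C : ℝ}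

lemma mul_le_const_mul_mul (hw : ∀ i, 0 ≤ w i) (hab : ∀ i, a i ≤ C * b i) (i : ι) :
    w i * a i ≤ C * (w i * b i) :=
  (mul_le_mul_of_nonneg_left (hab i) (hw i)).trans_eq (mul_left_comm _ _ _)

lemma summable_mul_of_le_const_mul (hw : ∀ i, 0 ≤ w i) (ha : ∀ i, 0 ≤ a i)
    (hab : ∀ i, a i ≤ C * b i) (hb : Summable fun i => w i * b i) :
    Summable fun i => w i * a i :=
  (hb.mul_left C).of_nonneg_of_le (fun i => mul_nonneg (hw i) (ha i))
    (mul_le_const_mul_mul hw hab)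

lemma tsum_mul_le_const_mul_tsum (hw : ∀ i, 0 ≤ w i) (ha : ∀ i, 0 ≤ a i)
    (hab : ∀ i, a i ≤ C * b i) (hb : Summable fun i => w i * b i) :
    ∑' i, w i * a i ≤ C * ∑' i, w i * b i := by
  rw [← tsum_mul_left]
  exact (summable_mul_of_le_const_mul hw ha hab hb).tsum_le_tsum
    (mul_le_const_mul_mul hw hab) (hb.mul_left C)

end Summation

noncomputable def koetheMatrix (N j : ℕ) : ℝ :=
  ((N : ℝ) + 1) * min (2 ^ j) (((j : ℝ) + 1) ^ (N + 1))

namespace koetheMatrix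

lemma succ_le_min (N j : ℕ) : (j : ℝ) + 1 ≤ min (2 ^ j) (((j : ℝ) + 1) ^ (N + 1)) := by
  refine le_min ?_ (le_self_pow₀ (le_add_of_nonneg_left j.cast_nonneg) N.succ_ne_zero)
  exact_mod_cast Nat.lt_two_pow_self

lemma succ_le_left (N j : ℕ) : (N : ℝ) + 1 ≤ koetheMatrix N j :=
  le_mul_of_one_le_right (by positivity) (by linarith [succ_le_min N j, j.cast_nonneg (α := ℝ)])

lemma succ_le_right (N j : ℕ) : (j : ℝ) + 1 ≤ koetheMatrix N j :=
  (succ_le_min N j).trans <| le_mul_of_one_le_left (by positivity)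
    (le_add_of_nonneg_left N.cast_nonneg)

lemma one_le (N j : ℕ) : 1 ≤ koetheMatrix N j :=
  (le_add_of_nonneg_left N.cast_nonneg).trans (succ_le_left N j)

lemma nonneg (N j : ℕ) : 0 ≤ koetheMatrix N j :=
  zero_le_one.trans (one_le N j)

lemma monotone_left (j : ℕ) : Monotone fun N => koetheMatrix N j := by
  intro N N' h
  dsimp only [koetheMatrix]
  have : (1 : ℝ) ≤ j + 1 := le_add_of_nonneg_left j.cast_nonneg
  gcongr

lemma monotone_right (N : ℕ) : Monotone fun j => koetheMatrix N j := by
  intro j j' h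
  dsimp only [koetheMatrix]
  gcongr
  norm_num

lemma not_bddAbove_range_left (j : ℕ) : ¬ BddAbove (Set.range fun N => koetheMatrix N j) :=
  not_bddAbove_of_tendsto_atTop <| tendsto_atTop_mono (succ_le_left · j) <|
    tendsto_atTop_add_const_right _ 1 tendsto_natCast_atTop_atTop

lemma not_bddAbove_range_right (N : ℕ) : ¬ BddAbove (Set.range fun j => koetheMatrix N j) :=
  not_bddAbove_of_tendsto_atTop <| tendsto_atTop_mono (succ_le_right N) <|
    tendsto_atTop_add_const_right _ 1 tendsto_natCast_atTop_atTop

lemma succ_le_two_mul (N j : ℕ) : koetheMatrix N (j + 1) ≤ 2 * koetheMatrix N j := by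
  unfold koetheMatrix
  rw [mul_left_comm, Nat.cast_succ, add_assoc, one_add_one_eq_two]
  gcongr
  exact min_two_pow_succ_le (N + 1) j

lemma le_mul_succ_pow (N j : ℕ) : koetheMatrix N j ≤ (N + 1) * ((j : ℝ) + 1) ^ (N + 1) := by
  unfold koetheMatrix
  gcongr
  exact min_le_right _ _

lemma eventually_eq (N : ℕ) :
    ∀ᶠ j in atTop, koetheMatrix N j = (N + 1) * ((j : ℝ) + 1) ^ (N + 1) := by
  filter_upwards [eventually_succ_pow_le_two_pow (N + 1)] with j hj
  rw [koetheMatrix, min_eq_right hj]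

lemma tendsto_div_succ (N : ℕ) :
    Tendsto (fun j => koetheMatrix N j / koetheMatrix (N + 1) j) atTop (nhds 0) := by
  have h : Tendsto (fun j : ℕ => ((N : ℝ) + 1) / ((N + 2) * ((j : ℝ) + 1))) atTop (nhds 0) :=
    tendsto_const_nhds.div_atTop <| (tendsto_atTop_add_const_right _ 1
      tendsto_natCast_atTop_atTop).const_mul_atTop (by positivity)
  refine h.congr' ?_
  filter_upwards [eventually_eq N, eventually_eq (N + 1)] with j hN hN1
  rw [hN, hN1]
  field_simp
  push_cast
  ring

lemma tendsto_two_pow_div (N : ℕ) :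
    Tendsto (fun j => (2 : ℝ) ^ j / koetheMatrix N j) atTop atTop := by
  have h : Tendsto (fun j : ℕ => ((N + 1) * (((j : ℝ) + 1) ^ (N + 1) / 2 ^ j))) atTop
      (nhdsWithin 0 (Set.Ioi 0)) := by
    refine tendsto_nhdsWithin_iff.2
      ⟨?_, Eventually.of_forall fun j => Set.mem_Ioi.2 (by positivity)⟩
    simpa using (tendsto_succ_pow_div_two_pow (N + 1)).const_mul ((N : ℝ) + 1)
  refine h.inv_tendsto_nhdsGT_zero.congr' ?_
  filter_upwards [eventually_eq N] with j hj
  rw [hj, Pi.inv_apply, ← mul_div_assoc, inv_div]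

lemma exists_succ_pow_le_mul (N : ℕ) :
    ∃ C : ℝ, 0 < C ∧ ∀ j : ℕ, ((j : ℝ) + 1) ^ N ≤ C * koetheMatrix N j := by
  obtain ⟨C, hC⟩ := exists_succ_pow_le_mul_two_pow N
  refine ⟨max C 1, by positivity, fun j => ?_⟩
  have hle : ((j : ℝ) + 1) ^ N ≤ max C 1 * min (2 ^ j) (((j : ℝ) + 1) ^ (N + 1)) := by
    rw [mul_min_of_nonneg _ _ (by positivity)]
    refine le_min ((hC j).trans (by gcongr; exact le_max_left _ _)) ?_
    exact (pow_le_pow_right₀ (le_add_of_nonneg_left j.cast_nonneg) N.le_succ).trans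
      (le_mul_of_one_le_left (by positivity) (le_max_right _ _))
  exact hle.trans <| by
    unfold koetheMatrix
    gcongr
    exact le_mul_of_one_le_left (by positivity) (le_add_of_nonneg_left N.cast_nonneg)

lemma summable_abs_mul {x : ℕ → ℝ}
    (hx : ∀ K : ℕ, Summable fun j => |x j| * ((j : ℝ) + 1) ^ K) (N : ℕ) :
    Summable fun j => |x j| * koetheMatrix N j :=
  summable_mul_of_le_const_mul (fun _ => abs_nonneg _) (fun j => nonneg N j)
    (le_mul_succ_pow N) (hx (N + 1))

lemma seminorms_equivalent (N : ℕ) :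
    ∃ (M : ℕ) (C : ℝ), 0 < C ∧
      ∀ x : ℕ → ℝ, (∀ K : ℕ, Summable fun j => |x j| * ((j : ℝ) + 1) ^ K) →
        (∑' j, |x j| * ((j : ℝ) + 1) ^ N) ≤ C * (∑' j, |x j| * koetheMatrix M j) ∧
        (∑' j, |x j| * koetheMatrix N j) ≤ C * (∑' j, |x j| * ((j : ℝ) + 1) ^ M) := by
  obtain ⟨C, hC, hpow⟩ := exists_succ_pow_le_mul N
  refine ⟨N + 1, max C (N + 1), by positivity, fun x hx => ⟨?_, ?_⟩⟩
  · refine tsum_mul_le_const_mul_tsum (fun _ => abs_nonneg _) (fun j => by positivity)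
      (fun j => ?_) (summable_abs_mul hx (N + 1))
    calc ((j : ℝ) + 1) ^ N ≤ C * koetheMatrix N j := hpow j
      _ ≤ max C (N + 1) * koetheMatrix (N + 1) j := by
        gcongr
        exacts [nonneg _ _, le_max_left _ _, monotone_left j N.le_succ]
  · refine tsum_mul_le_const_mul_tsum (fun _ => abs_nonneg _)
      (fun j => nonneg N j) (fun j => ?_) (hx (N + 1))
    exact (le_mul_succ_pow N j).trans (by gcongr; exact le_max_right _ _)

end koetheMatrix

/-- There exists a matrix `(A_{N,j})` with the properties of Proposition 1, in particular the
seminorms `|x|_N = Σ_j |x_j| A_{N,j}` are equivalent to the seminorms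
`p_N(x) = Σ_j |x_j| (j+1)^N` on the space `s` of rapidly decreasing sequences. -/
theorem exists_matrix :
    ∃ A : ℕ → ℕ → ℝ,
      (∀ N j, 1 ≤ A N j) ∧
      (∀ j, Monotone (fun N => A N j) ∧ ¬ BddAbove (Set.range fun N => A N j)) ∧
      (∀ N, Monotone (fun j => A N j) ∧ ¬ BddAbove (Set.range fun j => A N j)) ∧
      (∀ N j, A N (j + 1) ≤ 2 * A N j) ∧
      (∀ N, Tendsto (fun j => A N j / A (N + 1) j) atTop (nhds 0)) ∧
      (∀ N, Tendsto (fun j => (2 : ℝ) ^ j / A N j) atTop atTop) ∧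
      (∀ N : ℕ, ∃ (M : ℕ) (C : ℝ), 0 < C ∧
        ∀ x : ℕ → ℝ, (∀ K : ℕ, Summable fun j => |x j| * (j + 1 : ℝ) ^ K) →
          (∑' j, |x j| * (j + 1 : ℝ) ^ N) ≤ C * (∑' j, |x j| * A M j) ∧
          (∑' j, |x j| * A N j) ≤ C * (∑' j, |x j| * (j + 1 : ℝ) ^ M)) :=
  ⟨koetheMatrix, koetheMatrix.one_le,
    fun j => ⟨koetheMatrix.monotone_left j, koetheMatrix.not_bddAbove_range_left j⟩,
    fun N => ⟨koetheMatrix.monotone_right N, koetheMatrix.not_bddAbove_range_right N⟩,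
    koetheMatrix.succ_le_two_mul, koetheMatrix.tendsto_div_succ,
    koetheMatrix.tendsto_two_pow_div, koetheMatrix.seminorms_equivalent⟩
end

section
/- The map k ↦ Next^k(0,0) is a bijection from ℕ onto ℕ×ℕ; consequently the function pos : ℕ×ℕ → ℕ, defined by pos(n,m) = k iff Next^k(0,0) = (n,m), is well defined. -/
/-!
Put `c 0 = 0` and `c n = b n` for `n ≥ 1`. Once the path has filled the rectangle
`[0, 2 c n] × [0, 2 n]`, it climbs boustrophedon-wise through the strip
`[2 c n + 1, c (n + 1)] × [0, 2 n]`, runs left along row `2 n + 1` to column `0` and right along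
row `2 n + 2` to column `2 c (n + 1)`, and then descends boustrophedon-wise through
`[c (n + 1) + 1, 2 c (n + 1)] × [0, 2 n + 1]`, which completes the next rectangle.
Counting the cells of these pieces gives an explicit `rank` with `rank (0, 0) = 0` and
`rank (Next p) = rank p + 1`, so `k ↦ Next^k (0, 0)` is injective. It is also surjective because
every cell of rank below `(2 c n + 1) (2 n + 1)` lies in the rectangle `[0, 2 c n] × [0, 2 n]`,
which has exactly that many cells.
-/

open scoped Classical in
/-- The function `Next` from Definition 4.1, defined from the sequence `(b_n)`. -/
noncomputable def nextFn (b : ℕ → ℕ) : ℕ × ℕ → ℕ × ℕ :=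
  fun p =>
    if (∃ n : ℕ, 1 ≤ n ∧ p.1 = b n ∧ Even p.2 ∧ p.2 < 2 * n) ∨
       (∃ n : ℕ, 1 ≤ n ∧ p.1 = 2 * b n + 1 ∧ Odd p.2 ∧ 0 < p.2 ∧ p.2 ≤ 2 * n) ∨
       (p.1 = 0 ∧ Odd p.2) then
      (p.1, p.2 + 1)
    else if (∃ n : ℕ, 1 ≤ n ∧ p.1 = b n + 1 ∧ Odd p.2 ∧ p.2 < 2 * n) ∨
        (∃ n : ℕ, 1 ≤ n ∧ p.1 = 2 * b n ∧ Even p.2 ∧ 0 < p.2 ∧ p.2 ≤ 2 * n) then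
      (p.1, p.2 - 1)
    else if Even p.2 then (p.1 + 1, p.2)
    else (p.1 - 1, p.2)

namespace Function

theorem bijective_iterate_of_rank {α : Type*} {f : α → α} {a : α} (r : α → ℕ)
    (hr₀ : r a = 0) (hr : ∀ x, r (f x) = r x + 1)
    (hfin : ∀ x, ∃ s : Finset α, x ∈ s ∧ ∀ y, r y < s.card → y ∈ s) :
    Bijective fun k => f^[k] a := by
  have hrk : ∀ k, r (f^[k] a) = k := fun k => by
    induction k with
    | zero => exact hr₀
    | succ k ih => rw [iterate_succ_apply', hr, ih]
  have hinj : Injective fun k => f^[k] a := LeftInverse.injective (g := r) hrk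
  refine ⟨hinj, fun x => ?_⟩
  classical
  obtain ⟨s, hxs, hs⟩ := hfin x
  have hsub : (Finset.range s.card).image (fun k => f^[k] a) ⊆ s := by
    intro y hy
    obtain ⟨k, hk, rfl⟩ := Finset.mem_image.mp hy
    exact hs _ (by rwa [hrk k, ← Finset.mem_range])
  have hcard : s.card ≤ ((Finset.range s.card).image fun k => f^[k] a).card := by
    rw [Finset.card_image_of_injective _ hinj, Finset.card_range]
  obtain ⟨k, -, hk⟩ := Finset.mem_image.mp ((Finset.eq_of_subset_of_card_le hsub hcard) ▸ hxs)
  exact ⟨k, hk⟩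

end Function

theorem nextFn_congr {b c : ℕ → ℕ} (h : ∀ n, 1 ≤ n → b n = c n) :
    nextFn b = nextFn c := by
  have key (P : ℕ → ℕ → Prop) :
      (∃ n, 1 ≤ n ∧ P n (b n)) ↔ ∃ n, 1 ≤ n ∧ P n (c n) :=
    exists_congr fun n => and_congr_right fun hn => by rw [h n hn]
  funext p
  unfold nextFn
  rw [key fun n x => p.1 = x ∧ Even p.2 ∧ p.2 < 2 * n,
    key fun n x => p.1 = 2 * x + 1 ∧ Odd p.2 ∧ 0 < p.2 ∧ p.2 ≤ 2 * n,
    key fun n x => p.1 = x + 1 ∧ Odd p.2 ∧ p.2 < 2 * n,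
    key fun n x => p.1 = 2 * x ∧ Even p.2 ∧ 0 < p.2 ∧ p.2 ≤ 2 * n]

structure IsSuperdoubling (c : ℕ → ℕ) : Prop where
  zero : c 0 = 0
  two_mul_lt : ∀ n, 2 * c n < c (n + 1)

namespace IsSuperdoubling

variable {c : ℕ → ℕ} {m n : ℕ}

theorem strictMono (hc : IsSuperdoubling c) : StrictMono c :=
  strictMono_nat_of_lt_succ fun n => by have := hc.two_mul_lt n; omega

theorem two_mul_lt_of_lt (hc : IsSuperdoubling c) (h : m < n) : 2 * c m < c n :=
  (hc.two_mul_lt m).trans_le (hc.strictMono.monotone h)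

theorem pos (hc : IsSuperdoubling c) (h : 0 < n) : 0 < c n :=
  hc.zero ▸ hc.strictMono h

theorem exists_lt_le_succ (hc : IsSuperdoubling c) {i : ℕ} (hi : 0 < i) :
    ∃ n, c n < i ∧ i ≤ c (n + 1) := by
  classical
  have hex : ∃ n, i ≤ c (n + 1) := ⟨i, (Nat.le_succ i).trans hc.strictMono.le_apply⟩
  refine ⟨Nat.find hex, ?_, Nat.find_spec hex⟩
  rcases h : Nat.find hex with _ | m
  · rwa [hc.zero]
  · exact not_le.mp (Nat.find_min hex (by omega : m < Nat.find hex))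

end IsSuperdoubling

namespace NextPath

variable {c : ℕ → ℕ} {i j m n t r w x : ℕ}

/-- Position of the cell `x` of row `r` when a strip of width `w` is traversed boustrophedon-wise,
`x` being counted from the side on which row `0` starts. -/
def snake (w x r : ℕ) : ℕ := r * w + if Even r then x else w - 1 - x

theorem snake_succ_of_even (hr : Even r) : snake w (x + 1) r = snake w x r + 1 := by
  simp only [snake, if_pos hr]; omega

theorem snake_of_odd (hr : Odd r) (hx : x + 1 < w) : snake w x r = snake w (x + 1) r + 1 := by
  simp only [snake, if_neg (Nat.not_even_iff_odd.mpr hr)]; omega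

theorem snake_pred_add_one (hr : Even r) (hw : 0 < w) :
    snake w (w - 1) r + 1 = (r + 1) * w := by
  simp only [snake, if_pos hr, add_mul, one_mul]; omega

theorem snake_zero_add_one (hr : Odd r) (hw : 0 < w) : snake w 0 r + 1 = (r + 1) * w := by
  simp only [snake, if_neg (Nat.not_even_iff_odd.mpr hr), add_mul, one_mul]; omega

theorem snake_up_of_even (hr : Even r) (hw : 0 < w) :
    snake w (w - 1) (r + 1) = snake w (w - 1) r + 1 := by
  rw [snake_pred_add_one hr hw, snake, if_neg (by simpa [Nat.even_add_one] using hr)]; omega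

theorem snake_up_of_odd (hr : Odd r) (hw : 0 < w) : snake w 0 (r + 1) = snake w 0 r + 1 := by
  rw [snake_zero_add_one hr hw, snake, if_pos (by simpa [Nat.even_add_one] using hr)]; omega

/-- The path reaches `(0, 2 t)`, `(2 c n, 2 n - 1)` and `(2 c n + 1, 0)` at the times
`rowStart c t`, `descentStart c n` and `ascentStart c n`; the last one is the area of
`[0, 2 c n] × [0, 2 n]`. -/
def rowStart (c : ℕ → ℕ) (t : ℕ) : ℕ := 2 * t * (c t + 1)

def descentStart (c : ℕ → ℕ) (n : ℕ) : ℕ := rowStart c n + 2 * c n + 1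

def ascentStart (c : ℕ → ℕ) (n : ℕ) : ℕ := (2 * c n + 1) * (2 * n + 1)

theorem descentStart_add : descentStart c n + 2 * n * c n = ascentStart c n := by
  simp only [descentStart, rowStart, ascentStart]; ring

theorem ascentStart_add (hc : IsSuperdoubling c) (n : ℕ) :
    ascentStart c n + (2 * n + 1) * (c (n + 1) - 2 * c n) + c (n + 1) + 1 =
      rowStart c (n + 1) := by
  obtain ⟨d, hd⟩ := Nat.exists_eq_add_of_le (hc.two_mul_lt n).le
  rw [ascentStart, rowStart, hd, Nat.add_sub_cancel_left]; ring

theorem succ_le_rowStart (t : ℕ) : c (t + 1) + 1 ≤ rowStart c (t + 1) := by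
  unfold rowStart; nlinarith

theorem rowStart_mono (hc : IsSuperdoubling c) : Monotone (rowStart c) := fun _ _ h => by
  unfold rowStart; gcongr; exact hc.strictMono.monotone h

theorem ascentStart_mono (hc : IsSuperdoubling c) : Monotone (ascentStart c) := fun _ _ h => by
  unfold ascentStart; gcongr; exact hc.strictMono.monotone h

theorem ascentStart_lt_rowStart (hc : IsSuperdoubling c) (h : n < t) :
    ascentStart c n < rowStart c t := by
  have := ascentStart_add hc n
  have : rowStart c (n + 1) ≤ rowStart c t := rowStart_mono hc h
  omega

noncomputable def stage (c : ℕ → ℕ) (i : ℕ) : ℕ := sInf {n | i ≤ c (n + 1)}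

theorem stage_eq (hc : StrictMono c) (h₁ : c n < i) (h₂ : i ≤ c (n + 1)) : stage c i = n := by
  refine le_antisymm (Nat.sInf_le h₂) (le_csInf ⟨n, h₂⟩ fun m (hm : i ≤ c (m + 1)) => ?_)
  by_contra! hmn
  have := hc.monotone (show m + 1 ≤ n by omega)
  omega

/-- The regions are: row `2 t - 1` up to column `c t` and row `2 t` up to column `2 c t`;
otherwise, for `n = stage c i`, the descent block `[c n + 1, 2 c n] × [0, 2 n - 1]`, traversed from
its top right corner, or the climb strip `[2 c n + 1, c (n + 1)] × [0, 2 n]`. -/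
noncomputable def rank (c : ℕ → ℕ) : ℕ × ℕ → ℕ
  | (i, j) =>
    let n := stage c i
    if Even j ∧ i ≤ 2 * c (j / 2) then rowStart c (j / 2) + i
    else if Odd j ∧ i ≤ c (j / 2 + 1) then rowStart c (j / 2 + 1) - 1 - i
    else if i ≤ 2 * c n then descentStart c n + snake (c n) (2 * c n - i) (2 * n - 1 - j)
    else ascentStart c n + snake (c (n + 1) - 2 * c n) (i - 2 * c n - 1) j

theorem rank_even_of_le (h : i ≤ 2 * c t) : rank c (i, 2 * t) = rowStart c t + i := by
  have ht : 2 * t / 2 = t := by omega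
  simp only [rank, ht, if_pos (And.intro (even_two_mul t) h)]

theorem rank_odd_of_le (h : i ≤ c (t + 1)) :
    rank c (i, 2 * t + 1) = rowStart c (t + 1) - 1 - i := by
  have ht : (2 * t + 1) / 2 = t := by omega
  simp only [rank, ht,
    if_neg (fun h : Even (2 * t + 1) ∧ _ => Nat.not_even_two_mul_add_one t h.1),
    if_pos (And.intro (odd_two_mul_add_one t) h)]

theorem rank_zero_zero : rank c (0, 0) = 0 := by
  simp [rank, rowStart]

theorem rank_descent (hc : IsSuperdoubling c) (h₁ : c n < i) (h₂ : i ≤ 2 * c n)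
    (hj : j < 2 * n) :
    rank c (i, j) = descentStart c n + snake (c n) (2 * c n - i) (2 * n - 1 - j) := by
  have hs : stage c i = n := stage_eq hc.strictMono h₁ (h₂.trans (hc.two_mul_lt n).le)
  have hev : 2 * c (j / 2) < c n := hc.two_mul_lt_of_lt (by omega)
  have hodd (hj' : Odd j) : c (j / 2 + 1) ≤ c n :=
    hc.strictMono.monotone (by have := Nat.odd_iff.mp hj'; omega)
  simp only [rank, hs]
  rw [if_neg (fun h => by omega), if_neg (fun h => by have := hodd h.1; omega), if_pos h₂]

theorem rank_ascent (hc : IsSuperdoubling c) (h₁ : 2 * c n < i) (h₂ : i ≤ c (n + 1))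
    (hj : j ≤ 2 * n) :
    rank c (i, j) = ascentStart c n + snake (c (n + 1) - 2 * c n) (i - 2 * c n - 1) j := by
  have hs : stage c i = n := stage_eq hc.strictMono (by omega) h₂
  have hev : c (j / 2) ≤ c n := hc.strictMono.monotone (by omega)
  have hodd (hj' : Odd j) : c (j / 2 + 1) ≤ c n :=
    hc.strictMono.monotone (by have := Nat.odd_iff.mp hj'; omega)
  simp only [rank, hs]
  rw [if_neg (fun h => by omega), if_neg (fun h => by have := hodd h.1; omega),
    if_neg (by omega)]

theorem rank_up_climb_right (hc : IsSuperdoubling c) (ht : t < m) :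
    rank c (c m, 2 * t + 1) = rank c (c m, 2 * t) + 1 := by
  obtain ⟨n, rfl⟩ : ∃ n, m = n + 1 := ⟨m - 1, by omega⟩
  have hw := hc.two_mul_lt n
  rw [rank_ascent hc hw le_rfl (by omega : 2 * t ≤ 2 * n)]
  rcases (Nat.lt_succ_iff.mp ht).lt_or_eq with ht | rfl
  · rw [rank_ascent hc hw le_rfl (by omega), snake_up_of_even (even_two_mul t) (by omega),
      add_assoc]
  · have := snake_pred_add_one (even_two_mul t) (by omega : 0 < c (t + 1) - 2 * c t)
    have := ascentStart_add hc t
    rw [rank_odd_of_le le_rfl]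
    omega

theorem rank_up_climb_left (hc : IsSuperdoubling c) (ht : t < n) :
    rank c (2 * c n + 1, 2 * t + 1 + 1) = rank c (2 * c n + 1, 2 * t + 1) + 1 := by
  have hw := hc.two_mul_lt n
  rw [rank_ascent hc (by omega) hw (by omega), rank_ascent hc (by omega) hw (by omega),
    show 2 * c n + 1 - 2 * c n - 1 = 0 by omega,
    snake_up_of_odd (odd_two_mul_add_one t) (by omega), add_assoc]

theorem rank_up_zero (t : ℕ) : rank c (0, 2 * t + 1 + 1) = rank c (0, 2 * t + 1) + 1 := by
  have := succ_le_rowStart (c := c) t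
  rw [show 2 * t + 1 + 1 = 2 * (t + 1) by ring, rank_even_of_le (Nat.zero_le _),
    rank_odd_of_le (Nat.zero_le _)]
  omega

theorem rank_down_descent_left (hc : IsSuperdoubling c) (ht : t < n) :
    rank c (c n + 1, 2 * t) = rank c (c n + 1, 2 * t + 1) + 1 := by
  have hn := hc.pos (show 0 < n by omega)
  rw [rank_descent (n := n) hc (by omega) (by omega) (by omega),
    rank_descent (n := n) hc (by omega) (by omega) (by omega),
    show 2 * c n - (c n + 1) = c n - 1 by omega,
    show 2 * n - 1 - 2 * t = 2 * n - 1 - (2 * t + 1) + 1 by omega,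
    snake_up_of_even ⟨n - t - 1, by omega⟩ hn, add_assoc]

theorem rank_down_descent_right (hc : IsSuperdoubling c) (ht₀ : 0 < t) (ht : t ≤ n) :
    rank c (2 * c n, 2 * t - 1) = rank c (2 * c n, 2 * t) + 1 := by
  have hn := hc.pos (show 0 < n by omega)
  rw [rank_descent hc (by omega) le_rfl (by omega), Nat.sub_self]
  rcases ht.lt_or_eq with ht | rfl
  · rw [rank_descent hc (by omega) le_rfl (by omega), Nat.sub_self,
      show 2 * n - 1 - (2 * t - 1) = 2 * n - 1 - 2 * t + 1 by omega,
      snake_up_of_odd ⟨n - t - 1, by omega⟩ hn, add_assoc]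
  · rw [rank_even_of_le le_rfl, Nat.sub_self]
    simp [snake, descentStart, add_assoc]

theorem rank_right (hc : IsSuperdoubling c) (hU : ∀ m, t < m → i ≠ c m)
    (hD : 0 < t → ∀ m, t ≤ m → i ≠ 2 * c m) :
    rank c (i + 1, 2 * t) = rank c (i, 2 * t) + 1 := by
  rcases lt_trichotomy i (2 * c t) with hl | rfl | hl
  · rw [rank_even_of_le hl, rank_even_of_le hl.le, add_assoc]
  · obtain rfl : t = 0 := by by_contra h; exact hD (by omega) t le_rfl rfl
    have h₀ := hc.zero
    have h₁ := hc.two_mul_lt 0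
    show rank c (2 * c 0 + 1, 0) = rank c (2 * c 0, 0) + 1
    rw [rank_ascent (n := 0) hc (by omega) (by omega) le_rfl, h₀,
      rank_even_of_le (t := 0) (by omega)]
    simp [snake, ascentStart, rowStart, h₀]
  obtain ⟨n, h₁, h₂⟩ := hc.exists_lt_le_succ (i := i) (by omega)
  have htn : t ≤ n :=
    Nat.lt_succ_iff.mp (hc.strictMono.lt_iff_lt.mp (show c t < c (n + 1) by omega))
  by_cases hd : i ≤ 2 * c n
  · have htn : t < n := htn.lt_of_ne (by rintro rfl; omega)
    rcases hd.lt_or_eq with hd | rfl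
    · rw [rank_descent hc h₁ hd.le (by omega), rank_descent hc (by omega) hd (by omega),
        show 2 * c n - i = 2 * c n - (i + 1) + 1 by omega,
        snake_of_odd ⟨n - t - 1, by omega⟩ (by omega), add_assoc]
    · obtain rfl : t = 0 := by by_contra h; exact hD (by omega) n htn.le rfl
      show rank c (2 * c n + 1, 0) = rank c (2 * c n, 0) + 1
      rw [rank_ascent hc (by omega) (hc.two_mul_lt n) (Nat.zero_le _),
        rank_descent hc h₁ le_rfl (by omega),
        Nat.sub_self, Nat.sub_zero, add_assoc, snake_zero_add_one ⟨n - 1, by omega⟩ (by omega),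
        Nat.sub_add_cancel (by omega), descentStart_add]
      simp [snake]
  · have hi : i + 1 ≤ c (n + 1) := h₂.lt_of_ne (hU (n + 1) (by omega))
    rw [rank_ascent hc (by omega) h₂ (by omega), rank_ascent hc (by omega) hi (by omega),
      show i + 1 - 2 * c n - 1 = i - 2 * c n - 1 + 1 by omega,
      snake_succ_of_even (even_two_mul t), add_assoc]

theorem rank_left (hc : IsSuperdoubling c) (hi : i ≠ 0) (hU : ∀ m, t < m → i ≠ 2 * c m + 1)
    (hD : ∀ m, t < m → i ≠ c m + 1) :
    rank c (i - 1, 2 * t + 1) = rank c (i, 2 * t + 1) + 1 := by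
  by_cases hl : i ≤ c (t + 1)
  · have := succ_le_rowStart (c := c) t
    rw [rank_odd_of_le hl, rank_odd_of_le (by omega)]
    omega
  obtain ⟨n, h₁, h₂⟩ := hc.exists_lt_le_succ (i := i) (by omega)
  have htn : t < n :=
    Nat.succ_lt_succ_iff.mp (hc.strictMono.lt_iff_lt.mp (show c (t + 1) < c (n + 1) by omega))
  by_cases hd : i ≤ 2 * c n
  · have hi' : c n < i - 1 := by have := hD n htn; omega
    rw [rank_descent hc h₁ hd (by omega), rank_descent hc hi' (by omega) (by omega),
      show 2 * c n - (i - 1) = 2 * c n - i + 1 by omega,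
      snake_succ_of_even ⟨n - t - 1, by omega⟩, add_assoc]
  · have hi' : 2 * c n < i - 1 := by have := hU n htn; omega
    rw [rank_ascent hc (by omega) h₂ (by omega), rank_ascent hc hi' (by omega) (by omega),
      show i - 2 * c n - 1 = i - 1 - 2 * c n - 1 + 1 by omega,
      snake_of_odd (odd_two_mul_add_one t) (by omega), add_assoc]

theorem rank_nextFn (hc : IsSuperdoubling c) (p : ℕ × ℕ) :
    rank c (nextFn c p) = rank c p + 1 := by
  obtain ⟨i, j⟩ := p
  simp only [nextFn]
  split_ifs with hup hdown hj
  · rcases hup with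
      ⟨m, -, rfl, hj, ht⟩ | ⟨m, -, rfl, ⟨t, rfl⟩, -, ht⟩ | ⟨rfl, ⟨t, rfl⟩⟩
    · obtain ⟨t, rfl⟩ := hj.two_dvd
      exact rank_up_climb_right hc (by omega)
    · exact rank_up_climb_left hc (by omega)
    · exact rank_up_zero t
  · rcases hdown with ⟨m, -, rfl, ⟨t, rfl⟩, ht⟩ | ⟨m, -, rfl, hj, hj₀, ht⟩
    · exact rank_down_descent_left hc (by omega)
    · obtain ⟨t, rfl⟩ := hj.two_dvd
      exact rank_down_descent_right hc (by omega) (by omega)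
  · obtain ⟨t, rfl⟩ := hj.two_dvd
    exact rank_right hc
      (fun m htm hi => hup (Or.inl ⟨m, by omega, hi, even_two_mul t, by omega⟩))
      fun ht m htm hi => hdown (Or.inr ⟨m, by omega, hi, even_two_mul t, by omega, by omega⟩)
  · obtain ⟨t, rfl⟩ := Nat.not_even_iff_odd.mp hj
    exact rank_left hc (fun hi => hup (Or.inr (Or.inr ⟨hi, odd_two_mul_add_one t⟩)))
      (fun m htm hi =>
        hup (Or.inr (Or.inl ⟨m, by omega, hi, odd_two_mul_add_one t, by omega, by omega⟩)))
      fun m htm hi => hdown (Or.inl ⟨m, by omega, hi, odd_two_mul_add_one t, by omega⟩)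

theorem bounds_of_rank_lt_ascentStart_of_block (hc : IsSuperdoubling c) (h₁ : c n < i)
    (h₂ : i ≤ c (n + 1))
    (hj : j ≤ 2 * n) (hj' : i ≤ 2 * c n → j < 2 * n) (h : rank c (i, j) < ascentStart c m) :
    i ≤ 2 * c m ∧ j ≤ 2 * m := by
  by_cases hd : i ≤ 2 * c n
  · rw [rank_descent hc h₁ hd (hj' hd), descentStart] at h
    have hnm : n ≤ m := by
      by_contra! h'; have := ascentStart_lt_rowStart hc h'; omega
    have := hc.strictMono.monotone hnm
    omega
  · rw [rank_ascent hc (by omega) h₂ hj] at h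
    have hnm : n + 1 ≤ m := by
      by_contra! h'; have := ascentStart_mono hc (Nat.lt_succ_iff.mp h'); omega
    have := hc.strictMono.monotone hnm
    omega

theorem bounds_of_rank_lt_ascentStart (hc : IsSuperdoubling c)
    (h : rank c (i, j) < ascentStart c m) :
    i ≤ 2 * c m ∧ j ≤ 2 * m := by
  have hmono := hc.strictMono.monotone
  obtain ⟨t, rfl | rfl⟩ := Nat.even_or_odd' j
  · by_cases hl : i ≤ 2 * c t
    · rw [rank_even_of_le hl] at h
      have htm : t ≤ m := by
        by_contra! h'; have := ascentStart_lt_rowStart hc h'; omega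
      have := hmono htm
      omega
    obtain ⟨n, h₁, h₂⟩ := hc.exists_lt_le_succ (i := i) (by omega)
    have htn : t < n + 1 := hc.strictMono.lt_iff_lt.mp (show c t < c (n + 1) by omega)
    refine bounds_of_rank_lt_ascentStart_of_block hc h₁ h₂ (by omega) (fun hd => ?_) h
    have : t ≠ n := by rintro rfl; omega
    omega
  · by_cases hl : i ≤ c (t + 1)
    · rw [rank_odd_of_le hl] at h
      have htm : t < m := by
        by_contra! h'
        have := ascentStart_add hc t
        have := ascentStart_mono hc h'
        omega
      have := hmono (show t + 1 ≤ m from htm)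
      omega
    obtain ⟨n, h₁, h₂⟩ := hc.exists_lt_le_succ (i := i) (by omega)
    have htn : t + 1 < n + 1 :=
      hc.strictMono.lt_iff_lt.mp (show c (t + 1) < c (n + 1) by omega)
    exact bounds_of_rank_lt_ascentStart_of_block hc h₁ h₂ (by omega) (fun _ => by omega) h

theorem exists_finset_rank_lt_card (hc : IsSuperdoubling c) (p : ℕ × ℕ) :
    ∃ s : Finset (ℕ × ℕ), p ∈ s ∧ ∀ q, rank c q < s.card → q ∈ s := by
  obtain ⟨i, j⟩ := p
  have hm := hc.strictMono.le_apply (x := i + j)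
  refine ⟨Finset.range (2 * c (i + j) + 1) ×ˢ Finset.range (2 * (i + j) + 1), ?_,
    fun q hq => ?_⟩
  · simp only [Finset.mem_product, Finset.mem_range]; omega
  · rw [Finset.card_product, Finset.card_range, Finset.card_range, ← ascentStart] at hq
    have := bounds_of_rank_lt_ascentStart hc hq
    simp only [Finset.mem_product, Finset.mem_range]; omega

end NextPath

theorem next_iterate_bijective_general (b : ℕ → ℕ)
    (hbpos : ∀ n, 1 ≤ n → 0 < b n)
    (hbgap : ∀ n, 1 ≤ n → 2 * b n + 1 < b (n + 1)) :
    Function.Bijective (fun k : ℕ => (nextFn b)^[k] (0, 0)) := by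
  set c : ℕ → ℕ := fun n => if n = 0 then 0 else b n
  have hc : IsSuperdoubling c := by
    refine ⟨rfl, fun n => ?_⟩
    rcases Nat.eq_zero_or_pos n with rfl | hn
    · simpa [c] using hbpos 1 le_rfl
    · have := hbgap n hn
      simp only [c, Nat.pos_iff_ne_zero.mp hn, n.succ_ne_zero, if_false]; omega
  rw [nextFn_congr (c := c) fun n hn => (if_neg (by omega)).symm]
  exact Function.bijective_iterate_of_rank (NextPath.rank c) NextPath.rank_zero_zero
    (NextPath.rank_nextFn hc) (NextPath.exists_finset_rank_lt_card hc)

/-- The map `k ↦ Next^k (0,0)` is a bijection from `ℕ` onto `ℕ × ℕ`; consequently the function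
`pos`, defined by `pos (n, m) = k` iff `Next^k (0,0) = (n, m)`, is well defined. -/
theorem next_iterate_bijective (b : ℕ → ℕ)
    (hbpos : ∀ n, 1 ≤ n → 0 < b n)
    (hbmono : ∀ n, 1 ≤ n → b n < b (n + 1))
    (hbgap : ∀ n, 1 ≤ n → 2 * b n + 1 < b (n + 1)) :
    Function.Bijective (fun k : ℕ => (nextFn b)^[k] (0, 0)) :=
  next_iterate_bijective_general b hbpos hbgap
end

section
/- For every n ∈ ℕ, pos(Δ_{n+1},0) = pos(a_n,0) + pos(Δ_n,0). -/
/-!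
Off the columns `b_k`, the walk `Next` moves along row `0` one step to the right, so
`pos (m + d, 0) = pos (m, 0) + d` whenever no `b_k` lies in `[m, m + d)`. Since
`Δ_{n+1} = a_n + pos (Δ_n, 0)`, it suffices that no `b_k` lies in `[a_n, Δ_{n+1})`:
for `k ≤ n` we have `b_k ≤ b_n < a_n`, and for `k > n` we have `Δ_{n+1} < b_{n+1} ≤ b_k`.
-/

theorem pos_apply_eq_succ {α : Type*} {f : α → α} {x₀ : α} {pos : α → ℕ}
    (hpos : ∀ p k, pos p = k ↔ f^[k] x₀ = p) (p : α) : pos (f p) = pos p + 1 :=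
  (hpos _ _).2 <| by rw [Function.iterate_succ_apply', (hpos p _).1 rfl]

theorem nextFn_row_zero {b : ℕ → ℕ} {m : ℕ} (hm : ∀ k, 1 ≤ k → b k ≠ m) :
    nextFn b (m, 0) = (m + 1, 0) := by
  unfold nextFn
  rw [if_neg, if_neg, if_pos Even.zero]
  · rintro (⟨k, -, -, hodd, -⟩ | ⟨k, -, -, -, hpos, -⟩)
    · exact Nat.not_odd_zero hodd
    · exact hpos.false
  · rintro (⟨k, hk, hbk, -⟩ | ⟨k, -, -, hodd, -⟩ | ⟨-, hodd⟩)
    · exact hm k hk hbk.symm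
    · exact Nat.not_odd_zero hodd
    · exact Nat.not_odd_zero hodd

theorem pos_row_zero_add {b : ℕ → ℕ} {pos : ℕ × ℕ → ℕ}
    (hpos : ∀ p k, pos p = k ↔ (nextFn b)^[k] (0, 0) = p) {m d : ℕ}
    (hm : ∀ i < d, ∀ k, 1 ≤ k → b k ≠ m + i) : pos (m + d, 0) = pos (m, 0) + d := by
  induction d with
  | zero => rfl
  | succ d ih =>
    rw [← add_assoc, ← nextFn_row_zero fun k hk ↦ hm d d.lt_succ_self k hk,
      pos_apply_eq_succ hpos, ih fun i hi ↦ hm i (hi.trans d.lt_succ_self), add_assoc]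

theorem pos_delta_succ_general (b : ℕ → ℕ) (pos : ℕ × ℕ → ℕ) (a Δ : ℕ → ℕ)
    (hbmono : ∀ n, 1 ≤ n → b n < b (n + 1))
    (hpos : ∀ p k, pos p = k ↔ (nextFn b)^[k] (0, 0) = p)
    (hΔ : ∀ n, Δ (n + 1) = a n + pos (Δ n, 0))
    (h1b : Δ 1 < b 1)
    (hn : ∀ n, 1 ≤ n → 2 * b n < a n ∧ Δ (n + 1) < b (n + 1)) :
    ∀ n : ℕ, pos (Δ (n + 1), 0) = pos (a n, 0) + pos (Δ n, 0) := by
  intro n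
  have hb : MonotoneOn b {k | 1 ≤ k} :=
    monotoneOn_nat_Ici_of_le_succ fun k hk ↦ (hbmono k hk).le
  have hΔb : Δ (n + 1) < b (n + 1) := by
    rcases n with _ | n
    · exact h1b
    · exact (hn (n + 1) n.succ_pos).2
  rw [hΔ n] at hΔb ⊢
  refine pos_row_zero_add hpos fun i hi k hk hbk ↦ ?_
  rcases Nat.lt_or_ge n k with hnk | hkn
  · have := hb (Nat.le_add_left 1 n) hk hnk
    omega
  · have hn1 : 1 ≤ n := hk.trans hkn
    have := hb hk hn1 hkn
    have := (hn n hn1).1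
    omega

/-- `pos (Δ_{n+1}, 0) = pos (a_n, 0) + pos (Δ_n, 0)`. -/
theorem pos_delta_succ (b : ℕ → ℕ) (pos : ℕ × ℕ → ℕ) (a Δ : ℕ → ℕ)
    (hbpos : ∀ n, 1 ≤ n → 0 < b n)
    (hbmono : ∀ n, 1 ≤ n → b n < b (n + 1))
    (hbgap : ∀ n, 1 ≤ n → 2 * b n + 1 < b (n + 1))
    (hpos : ∀ p k, pos p = k ↔ (nextFn b)^[k] (0, 0) = p)
    (hapos : ∀ n, 0 < a n)
    (hΔ0 : Δ 0 = 1)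
    (hΔ : ∀ n, Δ (n + 1) = a n + pos (Δ n, 0))
    (h0 : Δ 0 < a 0) (h1 : a 0 < Δ 1) (h1b : Δ 1 < b 1)
    (hn : ∀ n, 1 ≤ n → 2 * b n < a n ∧ Δ (n + 1) < b (n + 1)) :
    ∀ n : ℕ, pos (Δ (n + 1), 0) = pos (a n, 0) + pos (Δ n, 0) :=
  pos_delta_succ_general b pos a Δ hbmono hpos hΔ h1b hn
end

section
/- For every j ∈ ℕ and N ∈ ℕ: ‖e_{j+1}‖_N ≤ 2·‖e_j‖_{N+1} and |||e_{j+1}|||_N ≤ 2·|||e_j|||_N. -/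
/-- `enum k = Next^k (0, 0)`, the `k`-th element of the ordering of `ℕ × ℕ` defined by `Next`. -/
noncomputable def enum (b : ℕ → ℕ) (k : ℕ) : ℕ × ℕ := (nextFn b)^[k] (0, 0)

/-- The basis vector `e_k = e_{n,m}` where `pos (n, m) = k`, in `s₀,₀^ℕ = ℕ × ℕ →₀ ℝ`. -/
noncomputable def eVec (b : ℕ → ℕ) (k : ℕ) : ℕ × ℕ →₀ ℝ := Finsupp.single (enum b k) 1

/-- `|(x_{i,j})_i|_N = Σ_i |x_{i,j}| A_{N,i}`, the `N`-th seminorm of the `j`-th column. -/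
noncomputable def colNorm (A : ℕ → ℕ → ℝ) (N : ℕ) (x : ℕ × ℕ → ℝ) (j : ℕ) : ℝ :=
  ∑' i : ℕ, |x (i, j)| * A N i

/-- `‖x‖_N = Σ_{j ≤ N} |(x_{i,j})_i|_N`, the seminorms of `s^ℕ`. -/
noncomputable def normK (A : ℕ → ℕ → ℝ) (N : ℕ) (x : ℕ × ℕ → ℝ) : ℝ :=
  ∑ j ∈ Finset.range (N + 1), colNorm A N x j

/-- `|||x|||_N = Σ_j |(x_{i,j})_i|_N`, the norms of `s₀^ℕ`. -/
noncomputable def norm3 (A : ℕ → ℕ → ℝ) (N : ℕ) (x : ℕ × ℕ → ℝ) : ℝ :=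
  ∑' j : ℕ, colNorm A N x j

/-!
Each step of `Next` moves to a horizontally or vertically adjacent index, so the row index of
`e_{j+1}` exceeds that of `e_j` by at most one and its column index drops by at most one. Since
`e_{n,m}` has norm `A_{N,n}` (for `‖·‖_N` only when `m ≤ N`), the doubling condition
`A_{N,n+1} ≤ 2 A_{N,n}` and monotonicity of `A` in both indices give both estimates.
-/

section NextFn

variable (b : ℕ → ℕ) (p : ℕ × ℕ)

theorem nextFn_fst_le : (nextFn b p).1 ≤ p.1 + 1 := by
  unfold nextFn
  split_ifs <;> dsimp only <;> omega

theorem snd_le_nextFn_snd : p.2 ≤ (nextFn b p).2 + 1 := by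
  unfold nextFn
  split_ifs <;> dsimp only <;> omega

theorem enum_succ (k : ℕ) : enum b (k + 1) = nextFn b (enum b k) :=
  Function.iterate_succ_apply' _ _ _

end NextFn

section SingleNorms

variable (A : ℕ → ℕ → ℝ) (N : ℕ) (p : ℕ × ℕ)

theorem colNorm_single (j : ℕ) :
    colNorm A N (Finsupp.single p (1 : ℝ)) j = if j = p.2 then A N p.1 else 0 := by
  rw [colNorm, tsum_eq_single p.1]
  · by_cases hj : j = p.2 <;> simp [hj, Prod.ext_iff]
  · intro i hi
    simp [Prod.ext_iff, hi]

theorem normK_single :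
    normK A N (Finsupp.single p (1 : ℝ)) = if p.2 ≤ N then A N p.1 else 0 := by
  simp only [normK, colNorm_single, Finset.sum_ite_eq', Finset.mem_range, Nat.lt_succ_iff]

theorem norm3_single : norm3 A N (Finsupp.single p (1 : ℝ)) = A N p.1 := by
  simp only [norm3, colNorm_single, tsum_ite_eq]

end SingleNorms

theorem eVec_estimate_general
    (A : ℕ → ℕ → ℝ) (b : ℕ → ℕ)
    (hA1 : ∀ N j, 1 ≤ A N j)
    (hA2m : ∀ j, Monotone fun N => A N j)
    (hA3m : ∀ N, Monotone fun j => A N j)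
    (hA4 : ∀ N j, A N (j + 1) ≤ 2 * A N j)
    :
    ∀ j N : ℕ, normK A N ⇑(eVec b (j + 1)) ≤ 2 * normK A (N + 1) ⇑(eVec b j) ∧
      norm3 A N ⇑(eVec b (j + 1)) ≤ 2 * norm3 A N ⇑(eVec b j) := by
  intro j N
  simp only [eVec, normK_single, norm3_single]
  set p := enum b j
  have hrow : A N (enum b (j + 1)).1 ≤ 2 * A N p.1 := by
    rw [enum_succ]
    exact (hA3m N (nextFn_fst_le b p)).trans (hA4 N p.1)
  have hcol : p.2 ≤ (enum b (j + 1)).2 + 1 := enum_succ b j ▸ snd_le_nextFn_snd b p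
  refine ⟨?_, hrow⟩
  split_ifs with hq hp
  · linarith [hA2m p.1 N.le_succ]
  · omega
  · linarith [hA1 (N + 1) p.1]
  · norm_num

/-- For every `j` and `N` we have `‖e_{j+1}‖_N ≤ 2 ‖e_j‖_{N+1}` and `|||e_{j+1}|||_N ≤ 2 |||e_j|||_N`. -/
theorem eVec_estimate
    (A : ℕ → ℕ → ℝ) (b : ℕ → ℕ)
    (hA1 : ∀ N j, 1 ≤ A N j)
    (hA2m : ∀ j, Monotone fun N => A N j)
    (hA2u : ∀ j, ¬ BddAbove (Set.range fun N => A N j))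
    (hA3m : ∀ N, Monotone fun j => A N j)
    (hA3u : ∀ N, ¬ BddAbove (Set.range fun j => A N j))
    (hA4 : ∀ N j, A N (j + 1) ≤ 2 * A N j)
    (hA5 : ∀ N, Filter.Tendsto (fun j => A N j / A (N + 1) j) Filter.atTop (nhds 0))
    (hA6 : ∀ N, Filter.Tendsto (fun j => (2 : ℝ) ^ j / A N j) Filter.atTop Filter.atTop)
    (hbpos : ∀ n, 1 ≤ n → 0 < b n)
    (hbmono : ∀ n, 1 ≤ n → b n < b (n + 1))
    (hbgap : ∀ n, 1 ≤ n → 2 * b n + 1 < b (n + 1))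
    :
    ∀ j N : ℕ, normK A N ⇑(eVec b (j + 1)) ≤ 2 * normK A (N + 1) ⇑(eVec b j) ∧
      norm3 A N ⇑(eVec b (j + 1)) ≤ 2 * norm3 A N ⇑(eVec b j) :=
  eVec_estimate_general A b hA1 hA2m hA3m hA4
end
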